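/- arXiv:1909.13189 — 2 statements merged into one kernel-verified Lean document; each statement's English description precedes it below -/
import Mathlib

section
/- Let μ be a Borel measure on ℝ^d that assigns positive measure to every nonempty open set, let f : ℝ^d → ℝ be continuously differentiable (C¹), and let k ∈ {1,…,d}. Then ∫ (∂ₖ f(x))² dμ(x) = 0 if and only if f is independent of coordinate k. -/
open MeasureTheory

/-- `f` is independent of coordinate `k`. -/
def IndepCoord {d : ℕ} {α : Type*} (f : (Fin d → ℝ) → α) (k : Fin d) : Prop :=
  ∀ (x : Fin d → ℝ) (a b : ℝ), f (Function.update x k a) = f (Function.update x k b)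

theorem Continuous.lintegral_eq_zero_iff {X : Type*} [TopologicalSpace X] [MeasurableSpace X]
    [OpensMeasurableSpace X] {μ : Measure X} [μ.IsOpenPosMeasure] {g : X → ENNReal}
    (hg : Continuous g) : ∫⁻ x, g x ∂μ = 0 ↔ g = 0 := by
  rw [MeasureTheory.lintegral_eq_zero_iff hg.measurable, hg.ae_eq_iff_eq μ continuous_zero]

theorem HasFDerivAt.hasDerivAt_comp_update {𝕜 ι F : Type*} [NontriviallyNormedField 𝕜]
    [Fintype ι] [DecidableEq ι] [NormedAddCommGroup F] [NormedSpace 𝕜 F]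
    {f : (ι → 𝕜) → F} {f' : (ι → 𝕜) →L[𝕜] F} {x : ι → 𝕜} {k : ι} {t : 𝕜}
    (hf : HasFDerivAt f f' (Function.update x k t)) :
    HasDerivAt (fun s ↦ f (Function.update x k s)) (f' (Pi.single k 1)) t :=
  hf.comp_hasDerivAt t (hasDerivAt_update x k t)

theorem indepCoord_iff_fderiv_apply_single_eq_zero {d : ℕ} {F : Type*} [NormedAddCommGroup F]
    [NormedSpace ℝ F] {f : (Fin d → ℝ) → F} (hf : Differentiable ℝ f) (k : Fin d) :
    IndepCoord f k ↔ ∀ x, fderiv ℝ f x (Pi.single k 1) = 0 := by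
  have hline (x : Fin d → ℝ) (t : ℝ) :
      HasDerivAt (fun s ↦ f (Function.update x k s))
        (fderiv ℝ f (Function.update x k t) (Pi.single k 1)) t :=
    (hf _).hasFDerivAt.hasDerivAt_comp_update
  constructor
  · intro hind x
    have hconst : (fun s ↦ f (Function.update x k s)) = fun _ ↦ f x := by
      funext s
      rw [hind x s (x k), Function.update_eq_self]
    have hx := hline x (x k)
    rw [hconst, Function.update_eq_self] at hx
    exact hx.unique (hasDerivAt_const _ _)
  · intro hzero x a b
    exact is_const_of_deriv_eq_zero (fun t ↦ (hline x t).differentiableAt)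
      (fun t ↦ (hline x t).deriv.trans (hzero _)) a b

/-- For a C¹ function `f : ℝ^d → ℝ` and a Borel measure `μ` that is positive on nonempty open
sets, `∫ (∂ₖ f)² dμ = 0` if and only if `f` is independent of coordinate `k`. -/
theorem integral_sq_partialDeriv_eq_zero_iff_indepCoord (d : ℕ)
    (μ : Measure (Fin d → ℝ)) [μ.IsOpenPosMeasure]
    (f : (Fin d → ℝ) → ℝ) (hf : ContDiff ℝ 1 f) (k : Fin d) :
    (∫⁻ x, ENNReal.ofReal ((fderiv ℝ f x (Pi.single k 1)) ^ 2) ∂μ) = 0 ↔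
      IndepCoord f k := by
  have hcont : Continuous fun x ↦ ENNReal.ofReal (fderiv ℝ f x (Pi.single k 1) ^ 2) :=
    ENNReal.continuous_ofReal.comp
      (((hf.continuous_fderiv one_ne_zero).clm_apply continuous_const).pow 2)
  rw [hcont.lintegral_eq_zero_iff,
    indepCoord_iff_fderiv_apply_single_eq_zero (hf.differentiable one_ne_zero)]
  simp [funext_iff]
end

section
/- Let A be a d × d real matrix with all entries nonnegative, and define the binary relation r on {1,…,d} by r(i,j) if and only if A_{ij} ≠ 0. Then trace(exp(A)) = d if and only if the directed graph of r has no directed cycle, i.e., there is no index i with (i,i) in the transitive closure of r. Moreover, trace(exp(A)) ≥ d always holds. -/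
/-!
Expanding the exponential, `trace (exp A) = d + ∑_{k ≥ 1} trace (A ^ k) / k!`, and every term of
the tail is nonnegative. For a nonnegative matrix, `(A ^ k) i i > 0` exactly when the support
digraph has a closed walk of length `k` through `i`, so the tail vanishes iff there is no cycle.
-/

open Matrix NormedSpace
open scoped Nat

theorem HasSum.matrix_trace {X n R : Type*} [Fintype n] [AddCommMonoid R] [TopologicalSpace R]
    [ContinuousAdd R] {f : X → Matrix n n R} {a : Matrix n n R} (hf : HasSum f a) :
    HasSum (fun x => trace (f x)) (trace a) :=
  hasSum_sum fun i _ => Pi.hasSum.1 hf.matrix_diag i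

namespace Matrix

open Relation

variable {n : Type*} [Fintype n] [DecidableEq n]

section Semiring

variable {R : Type*} [Semiring R]

theorem transGen_of_pow_succ_apply_ne_zero {A : Matrix n n R} {k : ℕ} {i j : n}
    (h : (A ^ (k + 1)) i j ≠ 0) : TransGen (fun i j => A i j ≠ 0) i j := by
  induction k generalizing j with
  | zero => exact .single (by simpa using h)
  | succ k ih =>
    rw [pow_succ, mul_apply] at h
    obtain ⟨l, -, hl⟩ := Finset.exists_ne_zero_of_sum_ne_zero h
    exact .tail (ih (left_ne_zero_of_mul hl)) (right_ne_zero_of_mul hl)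

variable [PartialOrder R] [IsStrictOrderedRing R] {A : Matrix n n R}

theorem exists_pow_succ_apply_pos_of_transGen (hA : ∀ i j, 0 ≤ A i j) {i j : n}
    (h : TransGen (fun i j => A i j ≠ 0) i j) : ∃ k, 0 < (A ^ (k + 1)) i j := by
  induction h with
  | single hij => exact ⟨0, by simpa using (hA i _).lt_of_ne' hij⟩
  | @tail l j _ hlj ih =>
    obtain ⟨k, hk⟩ := ih
    refine ⟨k + 1, ?_⟩
    rw [pow_succ, mul_apply]
    exact Finset.sum_pos' (fun m _ => mul_nonneg (pow_apply_nonneg hA _ _ _) (hA m j))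
      ⟨l, Finset.mem_univ l, mul_pos hk ((hA l j).lt_of_ne' hlj)⟩

theorem forall_trace_pow_succ_eq_zero_iff (hA : ∀ i j, 0 ≤ A i j) :
    (∀ k, trace (A ^ (k + 1)) = 0) ↔ ∀ i, ¬TransGen (fun i j => A i j ≠ 0) i i := by
  simp only [trace, diag_apply, Finset.mem_univ, true_imp_iff,
    Finset.sum_eq_zero_iff_of_nonneg fun i _ => pow_apply_nonneg hA _ i i]
  refine ⟨fun h i hi => ?_, fun h k i => ?_⟩
  · obtain ⟨k, hk⟩ := exists_pow_succ_apply_pos_of_transGen hA hi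
    exact hk.ne' (h k i)
  · by_contra hk
    exact h i (transGen_of_pow_succ_apply_ne_zero hk)

end Semiring

variable {𝕂 : Type*} [RCLike 𝕂]

open scoped Norms.Operator in
theorem hasSum_trace_exp (A : Matrix n n 𝕂) :
    HasSum (fun k => (k ! : 𝕂)⁻¹ * trace (A ^ k)) (trace (exp A)) := by
  have := (exp_series_hasSum_exp' (𝕂 := 𝕂) A).matrix_trace
  simp only [trace_smul, smul_eq_mul] at this
  exact this

theorem hasSum_trace_exp_sub_card (A : Matrix n n 𝕂) :
    HasSum (fun k => ((k + 1)! : 𝕂)⁻¹ * trace (A ^ (k + 1)))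
      (trace (exp A) - Fintype.card n) := by
  simpa using (hasSum_nat_add_iff' 1).2 (hasSum_trace_exp A)

end Matrix

/-- For a nonnegative `d × d` real matrix `A`, `trace (exp A) = d` if and only if the support
digraph of `A` (edge `i → j` iff `A i j ≠ 0`) has no directed cycle; moreover
`trace (exp A) ≥ d` always holds. -/
theorem trace_exp_eq_dim_iff_acyclic (d : ℕ) (A : Matrix (Fin d) (Fin d) ℝ)
    (hA : ∀ i j, 0 ≤ A i j) :
    ((NormedSpace.exp A).trace = d ↔
        ∀ i : Fin d, ¬ Relation.TransGen (fun i j : Fin d => A i j ≠ 0) i i) ∧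
      (d : ℝ) ≤ (NormedSpace.exp A).trace := by
  have hsum := hasSum_trace_exp_sub_card A
  rw [Fintype.card_fin] at hsum
  have hterm : ∀ k, 0 ≤ ((k + 1)! : ℝ)⁻¹ * trace (A ^ (k + 1)) := fun k =>
    mul_nonneg (by positivity) (Finset.sum_nonneg fun i _ => pow_apply_nonneg hA _ i i)
  refine ⟨?_, sub_nonneg.1 (hsum.nonneg hterm)⟩
  have htail : trace (exp A) - d = 0 ↔
      HasSum (fun k => ((k + 1)! : ℝ)⁻¹ * trace (A ^ (k + 1))) 0 :=
    ⟨fun h => h ▸ hsum, hsum.unique⟩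
  rw [← forall_trace_pow_succ_eq_zero_iff hA, ← sub_eq_zero, htail,
    hasSum_zero_iff_of_nonneg hterm]
  simp only [funext_iff, Pi.zero_apply, mul_eq_zero, inv_eq_zero, Nat.cast_eq_zero,
    Nat.factorial_ne_zero, false_or]
end
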